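/- arXiv:1810.07116 — 2 statements merged into one kernel-verified Lean document; each statement's English description precedes it below -/
import Mathlib

section
/- The set MMC of minimal correlated patterns is an order ideal (on nonempty patterns): if I ∈ MMC and I₁ is a nonempty subset of I, then I₁ ∈ MMC. -/
/-!
Every transaction containing `X` meets the nonempty pattern `X₁ ⊆ X`, and bond is antitone, so
`X₁` is correlated. If some `Y ⊊ X₁` had `bond Y = bond X₁`, then, since conjunctive support can
only grow and disjunctive support only shrink when passing to `Y`, both supports would agree, i.e.
`Y` and `X₁` are contained in, resp. meet, exactly the same transactions. Substituting `Y` for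
`X₁` inside `X` then gives a strict subset `Y ∪ (X \ X₁)` of `X` with the same bond as `X`,
contradicting `X ∈ MMC`.
-/

open Finset

variable {τ ι : Type*} [DecidableEq ι]

/-- Conjunctive support: number of transactions containing the whole pattern. -/
def suppConj (T : Finset τ) (items : τ → Finset ι) (X : Finset ι) : ℕ :=
  (T.filter fun t => X ⊆ items t).card

/-- Disjunctive support: number of transactions containing at least one item of the pattern. -/
def suppDisj (T : Finset τ) (items : τ → Finset ι) (X : Finset ι) : ℕ :=
  (T.filter fun t => (X ∩ items t).Nonempty).card

/-- The bond measure (division by zero in `ℚ` yields `0`, matching the convention). -/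
def bond (T : Finset τ) (items : τ → Finset ι) (X : Finset ι) : ℚ :=
  (suppConj T items X : ℚ) / (suppDisj T items X : ℚ)

/-- Minimal correlated patterns: correlated patterns no strict subset of which
has the same bond value. -/
def MMC (T : Finset τ) (items : τ → Finset ι) (I : Finset ι) (minbond : ℚ) :
    Set (Finset ι) :=
  {X | X ⊆ I ∧ minbond ≤ bond T items X ∧
    ∀ Y : Finset ι, Y ⊂ X → bond T items Y ≠ bond T items X}

theorem eq_and_eq_of_div_eq_div {K : Type*} [Field K] [LinearOrder K] [IsStrictOrderedRing K]
    {a a' b b' : K} (ha : 0 < a) (hb' : 0 < b') (haa' : a ≤ a') (hbb' : b' ≤ b)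
    (h : a / b = a' / b') : a = a' ∧ b = b' := by
  have hb : 0 < b := hb'.trans_le hbb'
  rw [div_eq_div_iff hb.ne' hb'.ne'] at h
  constructor <;> nlinarith [mul_le_mul_of_nonneg_right haa' hb'.le,
    mul_le_mul_of_nonneg_left hbb' (ha.le.trans haa')]

section Supports

variable {T : Finset τ} {items : τ → Finset ι} {X Y : Finset ι}

theorem suppConj_anti (h : Y ⊆ X) : suppConj T items X ≤ suppConj T items Y :=
  card_le_card <| monotone_filter_right T fun _ _ hX => h.trans hX

theorem suppDisj_mono (h : Y ⊆ X) : suppDisj T items Y ≤ suppDisj T items X :=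
  card_le_card <| monotone_filter_right T fun _ _ hY => hY.mono (inter_subset_inter_right h)

theorem suppConj_le_suppDisj (hY : Y.Nonempty) (h : Y ⊆ X) :
    suppConj T items X ≤ suppDisj T items Y :=
  card_le_card <| monotone_filter_right T fun _ _ hX => by simpa [inter_eq_left.2 (h.trans hX)]

theorem subset_items_iff_of_suppConj_eq (h : Y ⊆ X)
    (hc : suppConj T items Y = suppConj T items X) {t : τ} (ht : t ∈ T) :
    Y ⊆ items t ↔ X ⊆ items t := by
  have hfilter := eq_of_subset_of_card_le
    (monotone_filter_right T fun _ _ hX => h.trans hX) (le_of_eq hc)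
  simpa [ht] using (congrArg (t ∈ ·) hfilter).symm

theorem inter_items_nonempty_iff_of_suppDisj_eq (h : Y ⊆ X)
    (hd : suppDisj T items Y = suppDisj T items X) {t : τ} (ht : t ∈ T) :
    (Y ∩ items t).Nonempty ↔ (X ∩ items t).Nonempty := by
  have hfilter := eq_of_subset_of_card_le
    (monotone_filter_right T fun _ _ hY => hY.mono (inter_subset_inter_right h)) (ge_of_eq hd)
  simpa [ht] using congrArg (t ∈ ·) hfilter

theorem suppConj_union_congr {A B : Finset ι} (h : ∀ t ∈ T, A ⊆ items t ↔ B ⊆ items t)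
    (C : Finset ι) : suppConj T items (A ∪ C) = suppConj T items (B ∪ C) := by
  unfold suppConj
  congr 1
  exact filter_congr fun t ht => by simp only [union_subset_iff, h t ht]

theorem suppDisj_union_congr {A B : Finset ι}
    (h : ∀ t ∈ T, (A ∩ items t).Nonempty ↔ (B ∩ items t).Nonempty) (C : Finset ι) :
    suppDisj T items (A ∪ C) = suppDisj T items (B ∪ C) := by
  unfold suppDisj
  congr 1
  exact filter_congr fun t ht => by simp only [union_inter_distrib_right, union_nonempty, h t ht]

theorem suppConj_pos_and_suppDisj_pos_of_bond_pos (h : 0 < bond T items X) :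
    0 < suppConj T items X ∧ 0 < suppDisj T items X := by
  rcases div_pos_iff.1 h with ⟨hc, hd⟩ | ⟨hc, _⟩
  · exact ⟨by exact_mod_cast hc, by exact_mod_cast hd⟩
  · exact absurd hc (not_lt.2 (by positivity))

theorem bond_anti_of_nonempty (hY : Y.Nonempty) (h : Y ⊆ X) (hX : 0 < bond T items X) :
    bond T items X ≤ bond T items Y := by
  have hd : 0 < suppDisj T items Y :=
    (suppConj_pos_and_suppDisj_pos_of_bond_pos hX).1.trans_le (suppConj_le_suppDisj hY h)
  exact div_le_div₀ (by positivity) (by exact_mod_cast suppConj_anti h) (by exact_mod_cast hd)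
    (by exact_mod_cast suppDisj_mono h)

theorem supp_eq_of_bond_eq (h : Y ⊆ X) (hX : 0 < bond T items X)
    (hb : bond T items Y = bond T items X) :
    suppConj T items Y = suppConj T items X ∧ suppDisj T items Y = suppDisj T items X := by
  have hcX := (suppConj_pos_and_suppDisj_pos_of_bond_pos hX).1
  have hdY := (suppConj_pos_and_suppDisj_pos_of_bond_pos (hb ▸ hX)).2
  obtain ⟨hc, hd⟩ := eq_and_eq_of_div_eq_div (K := ℚ) (by exact_mod_cast hcX)
    (by exact_mod_cast hdY) (by exact_mod_cast suppConj_anti h)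
    (by exact_mod_cast suppDisj_mono h) hb.symm
  exact ⟨by exact_mod_cast hc.symm, by exact_mod_cast hd.symm⟩

theorem bond_union_sdiff_eq {X₁ : Finset ι} (hYX₁ : Y ⊆ X₁) (hX₁X : X₁ ⊆ X)
    (hc : suppConj T items Y = suppConj T items X₁)
    (hd : suppDisj T items Y = suppDisj T items X₁) :
    bond T items (Y ∪ (X \ X₁)) = bond T items X := by
  conv_rhs => rw [← union_sdiff_of_subset hX₁X]
  unfold bond
  rw [suppConj_union_congr (fun t ht => subset_items_iff_of_suppConj_eq hYX₁ hc ht),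
    suppDisj_union_congr (fun t ht => inter_items_nonempty_iff_of_suppDisj_eq hYX₁ hd ht)]

end Supports

theorem union_sdiff_ssubset {α : Type*} [DecidableEq α] {X X₁ Y : Finset α} (hYX₁ : Y ⊂ X₁)
    (hX₁X : X₁ ⊆ X) : Y ∪ (X \ X₁) ⊂ X := by
  obtain ⟨a, haX₁, haY⟩ := exists_of_ssubset hYX₁
  refine ssubset_of_subset_of_ne (union_subset (hYX₁.subset.trans hX₁X) sdiff_subset) ?_
  rintro hX
  have ha : a ∈ Y ∪ (X \ X₁) := by rw [hX]; exact hX₁X haX₁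
  simp [haY, haX₁] at ha

theorem stmt2_general (T : Finset τ) (items : τ → Finset ι) (I : Finset ι)
    (minbond : ℚ) (hb0 : 0 < minbond)
    (X : Finset ι) (hX : X ∈ MMC T items I minbond)
    (X₁ : Finset ι) (hX₁ne : X₁.Nonempty) (hX₁X : X₁ ⊆ X) :
    X₁ ∈ MMC T items I minbond := by
  obtain ⟨hXI, hXb, hXmin⟩ := hX
  have hX₁b : minbond ≤ bond T items X₁ :=
    hXb.trans (bond_anti_of_nonempty hX₁ne hX₁X (hb0.trans_le hXb))
  refine ⟨hX₁X.trans hXI, hX₁b, fun Y hYX₁ hb => ?_⟩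
  obtain ⟨hc, hd⟩ := supp_eq_of_bond_eq hYX₁.subset (hb0.trans_le hX₁b) hb
  exact hXmin _ (union_sdiff_ssubset hYX₁ hX₁X) (bond_union_sdiff_eq hYX₁.subset hX₁X hc hd)

theorem stmt2 (T : Finset τ) (items : τ → Finset ι) (I : Finset ι)
    (hitems : ∀ t ∈ T, items t ⊆ I)
    (minbond : ℚ) (hb0 : 0 < minbond) (hb1 : minbond ≤ 1)
    (X : Finset ι) (hX : X ∈ MMC T items I minbond)
    (X₁ : Finset ι) (hX₁ne : X₁.Nonempty) (hX₁X : X₁ ⊆ X) :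
    X₁ ∈ MMC T items I minbond :=
  stmt2_general T items I minbond hb0 X hX X₁ hX₁ne hX₁X
end

section
/- Let X ∈ MCR. Then the set S := {Y ∈ RMMaxF : Y ⊆ X} is nonempty, and the support and bond of X are derived from RMMaxF by: Supp(∧X) = min{Supp(∧Y) : Y ∈ S} and bond(X) = min{bond(Y) : Y ∈ S}. -/
open Finset

variable {τ ι : Type*} [DecidableEq ι]

/-- Correlated patterns. -/
def MC (T : Finset τ) (items : τ → Finset ι) (I : Finset ι) (minbond : ℚ) :
    Set (Finset ι) :=
  {X | X ⊆ I ∧ minbond ≤ bond T items X}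

/-- Correlated rare patterns. -/
def MCR (T : Finset τ) (items : τ → Finset ι) (I : Finset ι) (minsupp : ℕ) (minbond : ℚ) :
    Set (Finset ι) :=
  {X | X ⊆ I ∧ minbond ≤ bond T items X ∧ suppConj T items X < minsupp}

/-- Closed correlated rare patterns. -/
def MFCR (T : Finset τ) (items : τ → Finset ι) (I : Finset ι) (minsupp : ℕ) (minbond : ℚ) :
    Set (Finset ι) :=
  {X | X ∈ MCR T items I minsupp minbond ∧
    ∀ Y : Finset ι, X ⊂ Y → Y ⊆ I → bond T items Y ≠ bond T items X}

/-- Minimal correlated rare patterns. -/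
def MMCR (T : Finset τ) (items : τ → Finset ι) (I : Finset ι) (minsupp : ℕ) (minbond : ℚ) :
    Set (Finset ι) :=
  {X | X ∈ MCR T items I minsupp minbond ∧
    ∀ Y : Finset ι, Y ⊂ X → bond T items Y ≠ bond T items X}

/-- Maximal correlated patterns. -/
def MCMax (T : Finset τ) (items : τ → Finset ι) (I : Finset ι) (minbond : ℚ) :
    Set (Finset ι) :=
  {X | X ∈ MC T items I minbond ∧
    ∀ Y : Finset ι, X ⊂ Y → Y ⊆ I → Y ∉ MC T items I minbond}

/-- Maximal closed correlated rare patterns. -/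
def MFCRMax (T : Finset τ) (items : τ → Finset ι) (I : Finset ι) (minsupp : ℕ) (minbond : ℚ) :
    Set (Finset ι) :=
  MFCR T items I minsupp minbond ∩ MCMax T items I minbond

/-- The representation `RMMaxF = MMCR ∪ MFCRMax`. -/
def RMMaxF (T : Finset τ) (items : τ → Finset ι) (I : Finset ι) (minsupp : ℕ) (minbond : ℚ) :
    Set (Finset ι) :=
  MMCR T items I minsupp minbond ∪ MFCRMax T items I minsupp minbond

/- Passing from `Y` to a superset `X` shrinks the conjunctive and enlarges the disjunctive support,
so bond can only drop (once `bond Y > 0`), and if `bond Y = bond X > 0` the conjunctive supports agree. So a minimal subset of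
`X` with the bond of `X` lies in `MMCR` and realises both minima; every other member of `RMMaxF`
below `X` is correlated, hence has positive bond, hence bond and support at least those of `X`. -/

section Bond

variable (T : Finset τ) (items : τ → Finset ι)

lemma suppConj_antitone : Antitone (suppConj T items) := fun _ _ hYX =>
  card_le_card <| monotone_filter_right _ fun _ _ ht => hYX.trans ht

lemma suppDisj_monotone : Monotone (suppDisj T items) := fun _ _ hYX =>
  card_le_card <| monotone_filter_right _ fun _ _ ht => ht.mono (inter_subset_inter_right hYX)

variable {T items}

lemma suppDisj_pos_of_bond_pos {X : Finset ι} (h : 0 < bond T items X) :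
    0 < suppDisj T items X := by
  by_contra! h0
  simp [bond, Nat.le_zero.mp h0] at h

lemma bond_le_bond_of_subset {Y X : Finset ι} (hYX : Y ⊆ X) (hY : 0 < bond T items Y) :
    bond T items X ≤ bond T items Y :=
  div_le_div₀ (Nat.cast_nonneg _) (by exact_mod_cast suppConj_antitone T items hYX)
    (by exact_mod_cast suppDisj_pos_of_bond_pos hY)
    (by exact_mod_cast suppDisj_monotone T items hYX)

lemma suppConj_eq_of_bond_eq {Y X : Finset ι} (hYX : Y ⊆ X) (hX : 0 < bond T items X)
    (h : bond T items Y = bond T items X) : suppConj T items Y = suppConj T items X := by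
  have hdX := suppDisj_pos_of_bond_pos hX
  have hdY := suppDisj_pos_of_bond_pos (h ▸ hX)
  have hc := suppConj_antitone T items hYX
  have hd := suppDisj_monotone T items hYX
  have hcross : suppConj T items Y * suppDisj T items X =
      suppConj T items X * suppDisj T items Y := by
    unfold bond at h
    rw [div_eq_div_iff (by positivity) (by positivity)] at h
    exact_mod_cast h
  -- `c_Y d_X = c_X d_Y ≤ c_X d_X`, so `c_Y ≤ c_X`
  nlinarith

end Bond

section Representation

variable {T : Finset τ} {items : τ → Finset ι} {I : Finset ι} {minsupp : ℕ} {minbond : ℚ}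

lemma mem_MCR_of_mem_RMMaxF {Y : Finset ι} (h : Y ∈ RMMaxF T items I minsupp minbond) :
    Y ∈ MCR T items I minsupp minbond :=
  h.elim (·.1) (·.1.1)

lemma exists_mem_MMCR_subset_bond_eq (hb0 : 0 < minbond) {X : Finset ι}
    (hX : X ∈ MCR T items I minsupp minbond) :
    ∃ Y ∈ MMCR T items I minsupp minbond, Y ⊆ X ∧
      bond T items Y = bond T items X ∧ suppConj T items Y = suppConj T items X := by
  obtain ⟨hXI, hXb, hXr⟩ := hX
  obtain ⟨Y, ⟨hYX, hYb⟩, hYmin⟩ := wellFounded_lt.has_min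
    {Y | Y ⊆ X ∧ bond T items Y = bond T items X} ⟨X, subset_rfl, rfl⟩
  have hYc := suppConj_eq_of_bond_eq hYX (hb0.trans_le hXb) hYb
  refine ⟨Y, ⟨⟨hYX.trans hXI, hYb ▸ hXb, hYc ▸ hXr⟩, ?_⟩, hYX, hYb, hYc⟩
  intro Z hZY hZb
  exact hYmin Z ⟨hZY.subset.trans hYX, hZb.trans hYb⟩ hZY

end Representation

theorem stmt11_general (T : Finset τ) (items : τ → Finset ι) (I : Finset ι)
    (minsupp : ℕ) (minbond : ℚ)
    (hb0 : 0 < minbond)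
    (X : Finset ι) (hX : X ∈ MCR T items I minsupp minbond) :
    let S := {Y | Y ∈ RMMaxF T items I minsupp minbond ∧ Y ⊆ X}
    S.Nonempty ∧
      IsLeast ((fun Y => suppConj T items Y) '' S) (suppConj T items X) ∧
        IsLeast ((fun Y => bond T items Y) '' S) (bond T items X) := by
  intro S
  obtain ⟨Y, hYmin, hYX, hYb, hYc⟩ := exists_mem_MMCR_subset_bond_eq hb0 hX
  have hYS : Y ∈ S := ⟨Or.inl hYmin, hYX⟩
  refine ⟨⟨Y, hYS⟩, ⟨⟨Y, hYS, hYc⟩, ?_⟩, ⟨⟨Y, hYS, hYb⟩, ?_⟩⟩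
  · rintro _ ⟨Z, ⟨-, hZX⟩, rfl⟩
    exact suppConj_antitone T items hZX
  · rintro _ ⟨Z, ⟨hZ, hZX⟩, rfl⟩
    exact bond_le_bond_of_subset hZX (hb0.trans_le (mem_MCR_of_mem_RMMaxF hZ).2.1)

theorem stmt11 (T : Finset τ) (items : τ → Finset ι) (I : Finset ι)
    (hitems : ∀ t ∈ T, items t ⊆ I)
    (minsupp : ℕ) (minbond : ℚ)
    (hs : 1 ≤ minsupp) (hb0 : 0 < minbond) (hb1 : minbond ≤ 1)
    (X : Finset ι) (hX : X ∈ MCR T items I minsupp minbond) :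
    let S := {Y | Y ∈ RMMaxF T items I minsupp minbond ∧ Y ⊆ X}
    S.Nonempty ∧
      IsLeast ((fun Y => suppConj T items Y) '' S) (suppConj T items X) ∧
        IsLeast ((fun Y => bond T items Y) '' S) (bond T items X) :=
  stmt11_general T items I minsupp minbond hb0 X hX
end
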